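/- Let (A₁,B₁,C₁) be a triple of d₁×d₁ complex matrices with equal diagonals and (A₂,B₂,C₂) a triple of d₂×d₂ complex matrices with equal diagonals. Then the direct-sum triple (A₁⊕A₂, B₁⊕B₂, C₁⊕C₂) of (d₁+d₂)×(d₁+d₂) matrices is triplewise completely positive if and only if both (A₁,B₁,C₁) and (A₂,B₂,C₂) are triplewise completely positive. -/
import Mathlib


open Matrix

/-- Triplewise complete positivity of a triple of square complex matrices. -/
def TCP {n : Type*} [Fintype n] (A B C : Matrix n n ℂ) : Prop :=
  ∃ (d' : ℕ) (V W : Matrix n (Fin d') ℂ),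
    A = (V ⊙ V.map star) * (W ⊙ W.map star)ᴴ ∧
    B = (V ⊙ W) * (V ⊙ W)ᴴ ∧
    C = (V ⊙ W.map star) * (V ⊙ W.map star)ᴴ

/-- The direct sum `M₁ ⊕ M₂` of two square matrices, as a block-diagonal matrix. -/
def directSum {d₁ d₂ : ℕ} (M₁ : Matrix (Fin d₁) (Fin d₁) ℂ)
    (M₂ : Matrix (Fin d₂) (Fin d₂) ℂ) :
    Matrix (Fin d₁ ⊕ Fin d₂) (Fin d₁ ⊕ Fin d₂) ℂ :=
  Matrix.fromBlocks M₁ 0 0 M₂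

lemma aux_mul {n : Type*} [Fintype n] {a b : ℕ} (M N : Matrix n (Fin a ⊕ Fin b) ℂ) :
    (M.submatrix id finSumFinEquiv.symm) * ((N.submatrix id finSumFinEquiv.symm))ᴴ
      = M * Nᴴ := by
  ext i j
  simp only [mul_apply, conjTranspose_apply, submatrix_apply, id]
  exact Equiv.sum_comp finSumFinEquiv.symm (fun c => M i c * star (N j c))

lemma had_blk {d₁ d₂ a b : ℕ} (M₁ N₁ : Matrix (Fin d₁) (Fin a) ℂ)
    (M₂ N₂ : Matrix (Fin d₂) (Fin b) ℂ) :
    (fromBlocks M₁ 0 0 M₂) ⊙ (fromBlocks N₁ 0 0 N₂)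
      = fromBlocks (M₁ ⊙ N₁) 0 0 (M₂ ⊙ N₂) := by
  ext (i | i) (k | k) <;> simp [hadamard_apply, fromBlocks]

lemma map_blk {d₁ d₂ a b : ℕ} (M₁ : Matrix (Fin d₁) (Fin a) ℂ)
    (M₂ : Matrix (Fin d₂) (Fin b) ℂ) :
    (fromBlocks M₁ 0 0 M₂).map star
      = fromBlocks (M₁.map star) 0 0 (M₂.map star) := by
  ext (i | i) (k | k) <;> simp [fromBlocks]

lemma key2 {d₁ d₂ a b : ℕ} (P₁ Q₁ : Matrix (Fin d₁) (Fin a) ℂ)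
    (P₂ Q₂ : Matrix (Fin d₂) (Fin b) ℂ) :
    ((fromBlocks P₁ 0 0 P₂).submatrix id finSumFinEquiv.symm)
        * ((fromBlocks Q₁ 0 0 Q₂).submatrix id finSumFinEquiv.symm)ᴴ
      = fromBlocks (P₁ * Q₁ᴴ) 0 0 (P₂ * Q₂ᴴ) := by
  rw [aux_mul, fromBlocks_conjTranspose, fromBlocks_multiply]
  simp

lemma restrict_mul {n m : Type*} [Fintype n] [Fintype m] {a : ℕ}
    (P Q : Matrix (n ⊕ m) (Fin a) ℂ) (i j : n) :
    ((P.submatrix Sum.inl id) * ((Q.submatrix Sum.inl id))ᴴ) i j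
      = (P * Qᴴ) (Sum.inl i) (Sum.inl j) := by
  simp [mul_apply, conjTranspose_apply]

lemma restrict_mul' {n m : Type*} [Fintype n] [Fintype m] {a : ℕ}
    (P Q : Matrix (n ⊕ m) (Fin a) ℂ) (i j : m) :
    ((P.submatrix Sum.inr id) * ((Q.submatrix Sum.inr id))ᴴ) i j
      = (P * Qᴴ) (Sum.inr i) (Sum.inr j) := by
  simp [mul_apply, conjTranspose_apply]

theorem stmt14 {d₁ d₂ : ℕ}
    (A₁ B₁ C₁ : Matrix (Fin d₁) (Fin d₁) ℂ)
    (A₂ B₂ C₂ : Matrix (Fin d₂) (Fin d₂) ℂ)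
    (hdiag₁ : ∀ i, A₁ i i = B₁ i i ∧ A₁ i i = C₁ i i)
    (hdiag₂ : ∀ i, A₂ i i = B₂ i i ∧ A₂ i i = C₂ i i) :
    TCP (directSum A₁ A₂) (directSum B₁ B₂) (directSum C₁ C₂) ↔
      TCP A₁ B₁ C₁ ∧ TCP A₂ B₂ C₂ := by
  constructor
  · rintro ⟨d', V, W, hA, hB, hC⟩
    constructor
    · refine ⟨d', V.submatrix Sum.inl id, W.submatrix Sum.inl id, ?_, ?_, ?_⟩
      · ext i j
        have h := congrFun (congrFun hA (Sum.inl i)) (Sum.inl j)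
        simp only [directSum, fromBlocks_apply₁₁] at h
        rw [h]
        exact restrict_mul (V ⊙ V.map star) (W ⊙ W.map star) i j
      · ext i j
        have h := congrFun (congrFun hB (Sum.inl i)) (Sum.inl j)
        simp only [directSum, fromBlocks_apply₁₁] at h
        rw [h]
        exact restrict_mul (V ⊙ W) (V ⊙ W) i j
      · ext i j
        have h := congrFun (congrFun hC (Sum.inl i)) (Sum.inl j)
        simp only [directSum, fromBlocks_apply₁₁] at h
        rw [h]
        exact restrict_mul (V ⊙ W.map star) (V ⊙ W.map star) i j
    · refine ⟨d', V.submatrix Sum.inr id, W.submatrix Sum.inr id, ?_, ?_, ?_⟩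
      · ext i j
        have h := congrFun (congrFun hA (Sum.inr i)) (Sum.inr j)
        simp only [directSum, fromBlocks_apply₂₂] at h
        rw [h]
        exact restrict_mul' (V ⊙ V.map star) (W ⊙ W.map star) i j
      · ext i j
        have h := congrFun (congrFun hB (Sum.inr i)) (Sum.inr j)
        simp only [directSum, fromBlocks_apply₂₂] at h
        rw [h]
        exact restrict_mul' (V ⊙ W) (V ⊙ W) i j
      · ext i j
        have h := congrFun (congrFun hC (Sum.inr i)) (Sum.inr j)
        simp only [directSum, fromBlocks_apply₂₂] at h
        rw [h]
        exact restrict_mul' (V ⊙ W.map star) (V ⊙ W.map star) i j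
  · rintro ⟨⟨a, V₁, W₁, hA₁, hB₁, hC₁⟩, ⟨b, V₂, W₂, hA₂, hB₂, hC₂⟩⟩
    refine ⟨a + b, (fromBlocks V₁ 0 0 V₂).submatrix id finSumFinEquiv.symm,
      (fromBlocks W₁ 0 0 W₂).submatrix id finSumFinEquiv.symm, ?_, ?_, ?_⟩
    · have : ((fromBlocks V₁ 0 0 V₂).submatrix id finSumFinEquiv.symm)
          ⊙ ((fromBlocks V₁ 0 0 V₂).submatrix id finSumFinEquiv.symm).map star
          = (fromBlocks (V₁ ⊙ V₁.map star) 0 0 (V₂ ⊙ V₂.map star)).submatrix id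
              finSumFinEquiv.symm := by
        rw [show ((fromBlocks V₁ 0 0 V₂).submatrix id finSumFinEquiv.symm).map star
            = ((fromBlocks V₁ 0 0 V₂).map star).submatrix id finSumFinEquiv.symm from rfl,
          show ((fromBlocks V₁ 0 0 V₂).submatrix id finSumFinEquiv.symm)
            ⊙ (((fromBlocks V₁ 0 0 V₂).map star).submatrix id finSumFinEquiv.symm)
            = ((fromBlocks V₁ 0 0 V₂) ⊙ (fromBlocks V₁ 0 0 V₂).map star).submatrix id
                finSumFinEquiv.symm from rfl, map_blk, had_blk]
      have hW : ((fromBlocks W₁ 0 0 W₂).submatrix id finSumFinEquiv.symm)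
          ⊙ ((fromBlocks W₁ 0 0 W₂).submatrix id finSumFinEquiv.symm).map star
          = (fromBlocks (W₁ ⊙ W₁.map star) 0 0 (W₂ ⊙ W₂.map star)).submatrix id
              finSumFinEquiv.symm := by
        rw [show ((fromBlocks W₁ 0 0 W₂).submatrix id finSumFinEquiv.symm).map star
            = ((fromBlocks W₁ 0 0 W₂).map star).submatrix id finSumFinEquiv.symm from rfl,
          show ((fromBlocks W₁ 0 0 W₂).submatrix id finSumFinEquiv.symm)
            ⊙ (((fromBlocks W₁ 0 0 W₂).map star).submatrix id finSumFinEquiv.symm)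
            = ((fromBlocks W₁ 0 0 W₂) ⊙ (fromBlocks W₁ 0 0 W₂).map star).submatrix id
                finSumFinEquiv.symm from rfl, map_blk, had_blk]
      rw [this, hW, key2, directSum, hA₁, hA₂]
    · have : ((fromBlocks V₁ 0 0 V₂).submatrix id finSumFinEquiv.symm)
          ⊙ ((fromBlocks W₁ 0 0 W₂).submatrix id finSumFinEquiv.symm)
          = (fromBlocks (V₁ ⊙ W₁) 0 0 (V₂ ⊙ W₂)).submatrix id finSumFinEquiv.symm := by
        rw [show ((fromBlocks V₁ 0 0 V₂).submatrix id finSumFinEquiv.symm)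
            ⊙ ((fromBlocks W₁ 0 0 W₂).submatrix id finSumFinEquiv.symm)
            = ((fromBlocks V₁ 0 0 V₂) ⊙ (fromBlocks W₁ 0 0 W₂)).submatrix id
                finSumFinEquiv.symm from rfl, had_blk]
      rw [this, key2, directSum, hB₁, hB₂]
    · have : ((fromBlocks V₁ 0 0 V₂).submatrix id finSumFinEquiv.symm)
          ⊙ ((fromBlocks W₁ 0 0 W₂).submatrix id finSumFinEquiv.symm).map star
          = (fromBlocks (V₁ ⊙ W₁.map star) 0 0 (V₂ ⊙ W₂.map star)).submatrix id
              finSumFinEquiv.symm := by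
        rw [show ((fromBlocks W₁ 0 0 W₂).submatrix id finSumFinEquiv.symm).map star
            = ((fromBlocks W₁ 0 0 W₂).map star).submatrix id finSumFinEquiv.symm from rfl,
          show ((fromBlocks V₁ 0 0 V₂).submatrix id finSumFinEquiv.symm)
            ⊙ (((fromBlocks W₁ 0 0 W₂).map star).submatrix id finSumFinEquiv.symm)
            = ((fromBlocks V₁ 0 0 V₂) ⊙ (fromBlocks W₁ 0 0 W₂).map star).submatrix id
                finSumFinEquiv.symm from rfl, map_blk, had_blk]
      rw [this, key2, directSum, hC₁, hC₂]
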